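/- arXiv:1706.02942 — 2 statements merged into one kernel-verified Lean document; each statement's English description precedes it below -/
import Mathlib

section
/- Let ζ₀, ζ₁ be real numbers and define ζ(V) = ζ₀ dim V₀ + ζ₁ dim V₁ for a quiver representation V with dimension vector (dim V₀, dim V₁). Let Z(V) = z₀ dim V₀ + z₁ dim V₁ where z₀, z₁ lie in the upper half plane {r e^{iπθ} : r > 0, θ ∈ (0,1]} with arg z_i = ζ_i ∈ (0, π]. Then for nonzero representations V, W, one has ζ(W)/ (dim W₀ + dim W₁) ≤ ζ(V)/(dim V₀ + dim V₁) if and only if arg Z(W) ≤ arg Z(V). -/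
open Real

/-!
Both sides reduce to the sign of `(ζ₁ - ζ₀) (W₀V₁ - W₁V₀)`. For the slopes this is
cross-multiplication. The central charges `Z(V)`, `Z(W)` lie in the cone `0 < arg z ≤ π`, where
`arg w ≤ arg z` is the sign of `Im (conj w * z) = |w| |z| sin (arg z - arg w)`. By bilinearity
`Im (conj Z(W) * Z(V)) = (W₀V₁ - W₁V₀) Im (conj z₀ * z₁)`, and `Im (conj z₀ * z₁)` has the sign
of `sin (ζ₁ - ζ₀)`, which is that of `ζ₁ - ζ₀` because `|ζ₁ - ζ₀| < π`.
-/

open ComplexConjugate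

lemma weighted_mean_le_weighted_mean_iff {K : Type*} [Field K] [LinearOrder K]
    [IsStrictOrderedRing K] {p q s t : K} (a b : K) (hpq : 0 < p + q) (hst : 0 < s + t) :
    (a * p + b * q) / (p + q) ≤ (a * s + b * t) / (s + t) ↔ 0 ≤ (b - a) * (p * t - q * s) := by
  rw [div_le_div_iff₀ hpq hst, ← sub_nonneg]
  ring_nf

lemma Real.sin_nonneg_iff {x : ℝ} (h₁ : -π < x) (h₂ : x < π) : 0 ≤ sin x ↔ 0 ≤ x :=
  ⟨fun h => not_lt.1 fun hx => (sin_neg_of_neg_of_neg_pi_lt hx h₁).not_ge h,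
    fun h => sin_nonneg_of_nonneg_of_le_pi h h₂.le⟩

lemma Real.sin_nonpos_iff {x : ℝ} (h₁ : -π < x) (h₂ : x < π) : sin x ≤ 0 ↔ x ≤ 0 :=
  ⟨fun h => not_lt.1 fun hx => (sin_pos_of_pos_of_lt_pi hx h₂).not_ge h,
    fun h => sin_nonpos_of_nonpos_of_neg_pi_le h h₁.le⟩

lemma Real.sin_mul_nonneg_iff {x : ℝ} (h₁ : -π < x) (h₂ : x < π) (y : ℝ) :
    0 ≤ sin x * y ↔ 0 ≤ x * y := by
  rw [mul_nonneg_iff, mul_nonneg_iff, sin_nonneg_iff h₁ h₂, sin_nonpos_iff h₁ h₂]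

namespace Complex

lemma arg_ofReal_mul_exp_mul_I {r θ : ℝ} (hr : 0 < r) (hθ : θ ∈ Set.Ioc (-π) π) :
    arg (r * exp (θ * I)) = θ := by
  rw [exp_mul_I, arg_mul_cos_add_sin_mul_I hr hθ]

lemma ne_zero_of_arg_pos {z : ℂ} (hz : 0 < arg z) : z ≠ 0 := by
  rintro rfl
  simp at hz

lemma arg_pos_iff {z : ℂ} : 0 < arg z ↔ 0 < z.im ∨ z.im = 0 ∧ z.re < 0 := by
  rw [lt_iff_le_and_ne, ne_comm, Ne, arg_nonneg_iff, arg_eq_zero_iff]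
  grind

lemma arg_add_pos {z w : ℂ} (hz : 0 < arg z) (hw : 0 < arg w) : 0 < arg (z + w) := by
  rw [arg_pos_iff] at *
  simp only [add_im, add_re]
  grind

lemma arg_mul_real_add_mul_real_pos {z w : ℂ} {a b : ℝ} (hz : 0 < arg z) (hw : 0 < arg w)
    (ha : 0 ≤ a) (hb : 0 ≤ b) (hab : 0 < a + b) : 0 < arg (z * a + w * b) := by
  rcases ha.eq_or_lt with rfl | ha
  · simpa [arg_mul_real (by linarith : 0 < b)] using hw
  rcases hb.eq_or_lt with rfl | hb
  · simpa [arg_mul_real ha] using hz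
  exact arg_add_pos (by rwa [arg_mul_real ha]) (by rwa [arg_mul_real hb])

lemma im_conj_mul (z w : ℂ) : (conj w * z).im = ‖w‖ * ‖z‖ * Real.sin (arg z - arg w) := by
  conv_lhs => rw [← norm_mul_exp_arg_mul_I z, ← norm_mul_exp_arg_mul_I w]
  simp only [exp_mul_I, map_mul, map_add, conj_ofReal, ← ofReal_cos, ← ofReal_sin, conj_I,
    mul_im, mul_re, add_im, add_re, ofReal_re, ofReal_im, neg_re, neg_im, I_re, I_im, Real.sin_sub]
  ring

lemma arg_le_arg_iff {z w : ℂ} (hz : 0 < arg z) (hw : 0 < arg w) :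
    arg w ≤ arg z ↔ 0 ≤ (conj w * z).im := by
  have hwz : 0 < ‖w‖ * ‖z‖ :=
    mul_pos (norm_pos_iff.2 (ne_zero_of_arg_pos hw)) (norm_pos_iff.2 (ne_zero_of_arg_pos hz))
  rw [im_conj_mul, mul_nonneg_iff_of_pos_left hwz,
    Real.sin_nonneg_iff (by linarith [arg_le_pi w]) (by linarith [arg_le_pi z]), sub_nonneg]

lemma im_conj_mul_of_linear_combination (z₀ z₁ : ℂ) (p q s t : ℝ) :
    (conj (z₀ * p + z₁ * q) * (z₀ * s + z₁ * t)).im = (conj z₀ * z₁).im * (p * t - q * s) := by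
  simp only [map_add, map_mul, conj_ofReal, mul_im, mul_re, add_im, add_re, conj_re, conj_im,
    ofReal_re, ofReal_im]
  ring

end Complex

open Complex in
/-- For central charges `z₀ = r₀ e^{iζ₀}`, `z₁ = r₁ e^{iζ₁}` with `r_j > 0` and
`ζ_j ∈ (0, π]`, and nonzero dimension vectors `(V₀, V₁)`, `(W₀, W₁)`, the normalized
slope `ζ(W)/(W₀+W₁) = (ζ₀W₀+ζ₁W₁)/(W₀+W₁)` and the argument of the central charge
`Z(W) = z₀W₀ + z₁W₁` induce the same ordering:
`ζ(W)/(W₀+W₁) ≤ ζ(V)/(V₀+V₁) ↔ arg Z(W) ≤ arg Z(V)`. -/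
theorem slope_iff_arg (ζ₀ ζ₁ r₀ r₁ : ℝ)
    (hζ₀ : ζ₀ ∈ Set.Ioc 0 π) (hζ₁ : ζ₁ ∈ Set.Ioc 0 π)
    (hr₀ : 0 < r₀) (hr₁ : 0 < r₁)
    (z₀ z₁ : ℂ)
    (hz₀ : z₀ = (r₀ : ℂ) * Complex.exp (ζ₀ * Complex.I))
    (hz₁ : z₁ = (r₁ : ℂ) * Complex.exp (ζ₁ * Complex.I))
    (V₀ V₁ W₀ W₁ : ℕ) (hV : ¬(V₀ = 0 ∧ V₁ = 0)) (hW : ¬(W₀ = 0 ∧ W₁ = 0)) :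
    (ζ₀ * W₀ + ζ₁ * W₁) / (W₀ + W₁) ≤ (ζ₀ * V₀ + ζ₁ * V₁) / (V₀ + V₁) ↔
      (z₀ * W₀ + z₁ * W₁).arg ≤ (z₀ * V₀ + z₁ * V₁).arg := by
  have harg₀ : arg z₀ = ζ₀ :=
    hz₀ ▸ arg_ofReal_mul_exp_mul_I hr₀ ⟨by linarith [hζ₀.1, pi_pos], hζ₀.2⟩
  have harg₁ : arg z₁ = ζ₁ :=
    hz₁ ▸ arg_ofReal_mul_exp_mul_I hr₁ ⟨by linarith [hζ₁.1, pi_pos], hζ₁.2⟩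
  have hVpos : (0 : ℝ) < V₀ + V₁ := by exact_mod_cast (by omega : 0 < V₀ + V₁)
  have hWpos : (0 : ℝ) < W₀ + W₁ := by exact_mod_cast (by omega : 0 < W₀ + W₁)
  have hpos₀ : 0 < arg z₀ := harg₀ ▸ hζ₀.1
  have hpos₁ : 0 < arg z₁ := harg₁ ▸ hζ₁.1
  have hZV : 0 < arg (z₀ * V₀ + z₁ * V₁) := by
    exact_mod_cast arg_mul_real_add_mul_real_pos hpos₀ hpos₁ V₀.cast_nonneg V₁.cast_nonneg hVpos
  have hZW : 0 < arg (z₀ * W₀ + z₁ * W₁) := by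
    exact_mod_cast arg_mul_real_add_mul_real_pos hpos₀ hpos₁ W₀.cast_nonneg W₁.cast_nonneg hWpos
  have hnorm : 0 < ‖z₀‖ * ‖z₁‖ :=
    mul_pos (norm_pos_iff.2 (ne_zero_of_arg_pos hpos₀)) (norm_pos_iff.2 (ne_zero_of_arg_pos hpos₁))
  have him := im_conj_mul_of_linear_combination z₀ z₁ W₀ W₁ V₀ V₁
  push_cast at him
  rw [weighted_mean_le_weighted_mean_iff _ _ hWpos hVpos, arg_le_arg_iff hZV hZW, him,
    im_conj_mul, harg₀, harg₁, mul_assoc, mul_nonneg_iff_of_pos_left hnorm,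
    Real.sin_mul_nonneg_iff (by linarith [hζ₀.2, hζ₁.1]) (by linarith [hζ₀.1, hζ₁.2])]
end

section
/- For m ≥ 1, the map σ : V₊(m) → V₊(m+1) defined on standard basis vectors by σ(e_i) = e_i + e_{i+1} (1 ≤ i ≤ m−1) and σ(f_j) = f_j + f_{j+1} (1 ≤ j ≤ m) is an injective homomorphism of representations of the conifold quiver, and its cokernel is isomorphic to the representation (ℂ, ℂ) with x acting by 1, z acting by −1, and y = w = 0. -/
/-- The arrow `x` of the representation `V₊(k+1)` of the conifold quiver:
`V₀ = ℂ^k` (basis `e₁,…,e_k`), `V₁ = ℂ^{k+1}` (basis `f₁,…,f_{k+1}`), `x(e_i) = f_i`. -/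
def xMap (k : ℕ) : (Fin k → ℂ) →ₗ[ℂ] (Fin (k + 1) → ℂ) where
  toFun v j := if h : (j : ℕ) < k then v ⟨j, h⟩ else 0
  map_add' u v := by funext j; by_cases h : (j : ℕ) < k <;> simp [h]
  map_smul' c v := by funext j; by_cases h : (j : ℕ) < k <;> simp [h]

/-- The arrow `z` of the representation `V₊(k+1)`: `z(e_i) = f_{i+1}`. -/
def zMap (k : ℕ) : (Fin k → ℂ) →ₗ[ℂ] (Fin (k + 1) → ℂ) where
  toFun v j := if h : 0 < (j : ℕ) then v ⟨(j : ℕ) - 1, by have := j.isLt; omega⟩ else 0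
  map_add' u v := by funext j; by_cases h : 0 < (j : ℕ) <;> simp only [h, ↓reduceDIte, Pi.add_apply, Pi.smul_apply, RingHom.id_apply, add_zero, smul_zero]
  map_smul' c v := by funext j; by_cases h : 0 < (j : ℕ) <;> simp only [h, ↓reduceDIte, Pi.add_apply, Pi.smul_apply, RingHom.id_apply, add_zero, smul_zero]

/-!
`σ = x + z` is injective because its matrix is lower unitriangular. The alternating sum
`λ(v) = ∑ⱼ (-1)ʲ vⱼ` satisfies `λ ∘ x = λ` and `λ ∘ z = -λ`, so it kills the range of `σ`;
counting dimensions, that range is exactly `ker λ`, and `λ` identifies the cokernel with `ℂ`,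
on which `x` then acts by `1` and `z` by `-1`.
-/

namespace ConifoldQuiver

section Arrows

variable {n : ℕ} (v : Fin n → ℂ) (i : Fin n)

@[simp] lemma xMap_castSucc : xMap n v i.castSucc = v i := by
  simp [xMap]

@[simp] lemma xMap_last : xMap n v (Fin.last n) = 0 := by
  simp [xMap]

@[simp] lemma zMap_zero : zMap n v 0 = 0 := by
  simp [zMap]

@[simp] lemma zMap_succ : zMap n v i.succ = v i := by
  simp [zMap]

end Arrows

lemma xMap_comp_zMap (k : ℕ) : (xMap (k + 1)).comp (zMap k) = (zMap (k + 1)).comp (xMap k) := by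
  ext v j
  simp only [LinearMap.comp_apply, xMap, zMap, LinearMap.coe_mk, AddHom.coe_mk]
  split_ifs <;> first | rfl | omega

lemma injective_xMap_add_zMap (k : ℕ) : Function.Injective (xMap k + zMap k) := by
  rw [← LinearMap.ker_eq_bot, LinearMap.ker_eq_bot']
  intro v hv
  suffices h : ∀ i (hi : i < k), v ⟨i, hi⟩ = 0 from funext fun i => h i i.isLt
  intro i
  induction i with
  | zero =>
    intro hi
    simpa [xMap, zMap, hi] using congrFun hv ⟨0, by omega⟩
  | succ i ih =>
    intro hi
    simpa [xMap, zMap, hi, ih (by omega)] using congrFun hv ⟨i + 1, by omega⟩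

noncomputable def altSum (n : ℕ) : (Fin n → ℂ) →ₗ[ℂ] ℂ :=
  ∑ j : Fin n, (-1 : ℂ) ^ (j : ℕ) • LinearMap.proj j

lemma altSum_apply {n : ℕ} (v : Fin n → ℂ) :
    altSum n v = ∑ j : Fin n, (-1 : ℂ) ^ (j : ℕ) * v j := by
  simp [altSum]

lemma altSum_xMap {n : ℕ} (v : Fin n → ℂ) : altSum (n + 1) (xMap n v) = altSum n v := by
  simp [altSum_apply, Fin.sum_univ_castSucc]

lemma altSum_zMap {n : ℕ} (v : Fin n → ℂ) : altSum (n + 1) (zMap n v) = -altSum n v := by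
  simp [altSum_apply, Fin.sum_univ_succ, pow_succ, Finset.sum_neg_distrib]

lemma altSum_surjective (n : ℕ) : Function.Surjective (altSum (n + 1)) :=
  fun c => ⟨Pi.single 0 c, by simp [altSum_apply, Fin.sum_univ_succ]⟩

lemma range_xMap_add_zMap (k : ℕ) :
    LinearMap.range (xMap k + zMap k) = LinearMap.ker (altSum (k + 1)) := by
  have hle : LinearMap.range (xMap k + zMap k) ≤ LinearMap.ker (altSum (k + 1)) := by
    rintro _ ⟨v, rfl⟩
    simp [altSum_xMap, altSum_zMap]
  refine Submodule.eq_of_le_of_finrank_eq hle ?_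
  have hker := LinearMap.finrank_range_add_finrank_ker (altSum (k + 1))
  rw [LinearMap.range_eq_top.mpr (altSum_surjective k)] at hker
  simp only [finrank_top, Module.finrank_self, Module.finrank_fin_fun] at hker
  rw [LinearMap.finrank_range_of_inj (injective_xMap_add_zMap k), Module.finrank_fin_fun]
  omega

noncomputable def cokernelEquiv (k : ℕ) :
    ((Fin (k + 1) → ℂ) ⧸ LinearMap.range (xMap k + zMap k)) ≃ₗ[ℂ] ℂ :=
  (Submodule.quotEquivOfEq _ _ (range_xMap_add_zMap k)).trans
    ((altSum (k + 1)).quotKerEquivOfSurjective (altSum_surjective k))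

lemma cokernelEquiv_mk (k : ℕ) (v : Fin (k + 1) → ℂ) :
    cokernelEquiv k (Submodule.Quotient.mk v) = altSum (k + 1) v := rfl

end ConifoldQuiver

open ConifoldQuiver in
/-- For `m = k+1 ≥ 1`, the map `σ : V₊(m) → V₊(m+1)`, `σ(e_i) = e_i + e_{i+1}`,
`σ(f_j) = f_j + f_{j+1}` (whose components are `xMap + zMap`) is an injective
homomorphism of representations of the conifold quiver (it intertwines the arrows
`x` and `z`; the arrows `y, w` are zero), and its cokernel is isomorphic to the
representation `(ℂ, ℂ)` on which `x` acts by `1` and `z` acts by `−1` (and `y = w = 0`). -/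
theorem sigma_injective_cokernel (k : ℕ) :
    Function.Injective (xMap k + zMap k) ∧
    Function.Injective (xMap (k + 1) + zMap (k + 1)) ∧
    (xMap (k + 1)).comp (xMap k + zMap k) = (xMap (k + 1) + zMap (k + 1)).comp (xMap k) ∧
    (zMap (k + 1)).comp (xMap k + zMap k) = (xMap (k + 1) + zMap (k + 1)).comp (zMap k) ∧
    ∃ (φ₀ : ((Fin (k + 1) → ℂ) ⧸ LinearMap.range (xMap k + zMap k)) ≃ₗ[ℂ] ℂ)
      (φ₁ : ((Fin (k + 2) → ℂ) ⧸ LinearMap.range (xMap (k + 1) + zMap (k + 1))) ≃ₗ[ℂ] ℂ),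
      ∀ v : Fin (k + 1) → ℂ,
        φ₁ (Submodule.Quotient.mk (p := LinearMap.range (xMap (k + 1) + zMap (k + 1)))
              (xMap (k + 1) v))
          = φ₀ (Submodule.Quotient.mk (p := LinearMap.range (xMap k + zMap k)) v) ∧
        φ₁ (Submodule.Quotient.mk (p := LinearMap.range (xMap (k + 1) + zMap (k + 1)))
              (zMap (k + 1) v))
          = -φ₀ (Submodule.Quotient.mk (p := LinearMap.range (xMap k + zMap k)) v) := by
  refine ⟨injective_xMap_add_zMap k, injective_xMap_add_zMap (k + 1), ?_, ?_,
    cokernelEquiv k, cokernelEquiv (k + 1), fun v => ?_⟩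
  · rw [LinearMap.comp_add, LinearMap.add_comp, xMap_comp_zMap]
  · rw [LinearMap.comp_add, LinearMap.add_comp, ← xMap_comp_zMap]
  · simp only [cokernelEquiv_mk, altSum_xMap, altSum_zMap, and_self]
end
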